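/- arXiv:2508.18759 — 2 statements merged into one kernel-verified Lean document; each statement's English description precedes it below -/
import Mathlib

section
/- Fix natural numbers k < n, a k-dimensional linear subspace V of ℝⁿ, and d ≤ n − k. Let p ∈ ℝⁿ and let Δ be a linear (d−1)-simplex in ℝⁿ ∖ {p} that is transverse to 𝔉(V). Then the join p⋆Δ is a non-degenerate linear d-simplex transverse to 𝔉(V) if and only if π_V(p) ∉ π_V(ASpan(Δ)). -/
noncomputable section

open Metric Set

/-- Two linear subspaces of ℝⁿ are transverse if the dimension of their span is maximal. -/
def Transv {n : ℕ} (V W : Submodule ℝ (EuclideanSpace ℝ (Fin n))) : Prop :=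
  Module.finrank ℝ ↥(V ⊔ W) = min (Module.finrank ℝ ↥V + Module.finrank ℝ ↥W) n

/-- The space of directions of the affine span of a family of points (Gr(Δ)). -/
def simplexDir {n m : ℕ} (v : Fin m → EuclideanSpace ℝ (Fin n)) :
    Submodule ℝ (EuclideanSpace ℝ (Fin n)) :=
  (affineSpan ℝ (Set.range v)).direction

/-- Orthogonal projection of ℝⁿ onto the orthogonal complement of V, as a map ℝⁿ → ℝⁿ. -/
def projPerp {n : ℕ} (V : Submodule ℝ (EuclideanSpace ℝ (Fin n)))
    (x : EuclideanSpace ℝ (Fin n)) : EuclideanSpace ℝ (Fin n) :=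
  (Submodule.orthogonalProjectionOnto Vᗮ x : EuclideanSpace ℝ (Fin n))

/-- Orthogonal projection onto V as a continuous linear endomorphism of ℝⁿ. -/
def projCL {n : ℕ} (V : Submodule ℝ (EuclideanSpace ℝ (Fin n))) :
    EuclideanSpace ℝ (Fin n) →L[ℝ] EuclideanSpace ℝ (Fin n) :=
  V.subtypeL.comp (Submodule.orthogonalProjectionOnto V)

/-- Operator-norm distance between orthogonal projections. -/
def dProj {n : ℕ} (V W : Submodule ℝ (EuclideanSpace ℝ (Fin n))) : ℝ :=
  ‖projCL V - projCL W‖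

/-- `p⋆Δ` is `δ`-semitransverse to `𝔉(V)` in `p`. -/
def SemiT {n m : ℕ} (δ : ℝ) (p : EuclideanSpace ℝ (Fin n))
    (v : Fin m → EuclideanSpace ℝ (Fin n))
    (V : Submodule ℝ (EuclideanSpace ℝ (Fin n))) : Prop :=
  ∀ p' : EuclideanSpace ℝ (Fin n), dist p' p < δ →
    AffineIndependent ℝ (Fin.cons p' v : Fin (m+1) → EuclideanSpace ℝ (Fin n)) ∧
    Transv (simplexDir (Fin.cons p' v : Fin (m+1) → EuclideanSpace ℝ (Fin n))) V

/-- Maximal distance between two vertices of a simplex. -/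
def rMax {n m : ℕ} (v : Fin m → EuclideanSpace ℝ (Fin n)) : ℝ :=
  ⨆ i, ⨆ j, dist (v i) (v j)

/-- Minimal distance between a vertex and the affine span of the opposite face. -/
def rMin {n m : ℕ} (v : Fin m → EuclideanSpace ℝ (Fin n)) : ℝ :=
  ⨅ i, Metric.infDist (v i) (affineSpan ℝ (v '' {i}ᶜ) : Set (EuclideanSpace ℝ (Fin n)))

/-- The degeneracy quantity Λ(Δ). -/
def Lam {n m : ℕ} (v : Fin (m+1) → EuclideanSpace ℝ (Fin n)) : ℝ :=
  sSup {t : ℝ | ∃ lam : Fin m → ℝ,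
    ‖∑ i, lam i • (v i.succ - v 0)‖ = 1 ∧ ∃ i, t = |lam i|}

/-- ε-transversality of a simplex with vertices `v` to the constant foliation `𝔉(V)`. -/
def EpsT {n m : ℕ} (ε : ℝ) (v : Fin (m+1) → EuclideanSpace ℝ (Fin n))
    (V : Submodule ℝ (EuclideanSpace ℝ (Fin n))) : Prop :=
  ∀ D : Submodule ℝ (EuclideanSpace ℝ (Fin n)),
    Module.finrank ℝ ↥D = m → dProj (simplexDir v) D < ε → Transv D V

/-- δ-semitransversality of a simplex in its `i`-th vertex. -/
def STat {n m : ℕ} (δ : ℝ) (w : Fin m → EuclideanSpace ℝ (Fin n)) (i : Fin m)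
    (V : Submodule ℝ (EuclideanSpace ℝ (Fin n))) : Prop :=
  ∀ p' : EuclideanSpace ℝ (Fin n), dist p' (w i) < δ →
    AffineIndependent ℝ (Function.update w i p') ∧
    Transv (simplexDir (Function.update w i p')) V

/-- The coordinate subspace ℝᵏ × {0} of ℝⁿ. -/
def stdFol (n k : ℕ) : Submodule ℝ (EuclideanSpace ℝ (Fin n)) where
  carrier := {x | ∀ i : Fin n, k ≤ (i : ℕ) → x i = 0}
  zero_mem' := fun i _ => rfl
  add_mem' := by
    intro x y hx hy i hi
    show x i + y i = 0
    rw [hx i hi, hy i hi, add_zero]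
  smul_mem' := by
    intro c x hx i hi
    show c * x i = 0
    rw [hx i hi, mul_zero]

/-- Graph of a linear map V → V⊥ as a subspace of ℝⁿ. -/
def graphOf {n : ℕ} {V : Submodule ℝ (EuclideanSpace ℝ (Fin n))}
    (T : ↥V →L[ℝ] ↥Vᗮ) : Submodule ℝ (EuclideanSpace ℝ (Fin n)) :=
  LinearMap.range (V.subtype + Vᗮ.subtype.comp T.toLinearMap)

/-!
Write `W` for the direction of `ASpan(Δ)` and `u = p - v₀` for a vertex `v₀` of `Δ`, so that the
direction of `p⋆Δ` is `ℝu + W`. The join is non-degenerate iff `u ∉ W`, and `π_V(p)` lies in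
`π_V(ASpan(Δ))` iff `u ∈ W + V`. Since `W` is transverse to `V` and `dim W + 1 + dim V ≤ n`,
the sum `W + V` is direct, and `ℝu + W` is transverse to `V` exactly when adding `u` raises
the dimension of `W + V`, i.e. when `u ∉ W + V`.
-/

open Module Submodule

lemma finrank_span_singleton_sup_eq_add_one_iff {K M : Type*} [DivisionRing K] [AddCommGroup M]
    [Module K M] [FiniteDimensional K M] {W : Submodule K M} {u : M} :
    finrank K ↥(span K {u} ⊔ W) = finrank K W + 1 ↔ u ∉ W := by
  refine ⟨fun h hu => ?_, fun hu => by rw [sup_comm, finrank_sup_span_singleton hu]⟩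
  rw [sup_eq_right.mpr ((span_singleton_le_iff_mem u W).mpr hu)] at h
  omega

section AffineIndependence

variable {k V P : Type*} [Field k] [AddCommGroup V] [Module k V] [AddTorsor V P] {m : ℕ}

lemma vectorSpan_range_cons (p : P) (v : Fin (m + 1) → P) :
    vectorSpan k (range (Fin.cons p v : Fin (m + 2) → P)) =
      span k {p -ᵥ v 0} ⊔ vectorSpan k (range v) := by
  rw [← direction_affineSpan, Fin.range_cons, ← affineSpan_insert_affineSpan,
    AffineSubspace.direction_affineSpan_insert (mem_affineSpan k (mem_range_self 0)),
    direction_affineSpan]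

lemma AffineIndependent.affineIndependent_cons_iff [FiniteDimensional k V] {v : Fin (m + 1) → P}
    (hv : AffineIndependent k v) (p : P) :
    AffineIndependent k (Fin.cons p v : Fin (m + 2) → P) ↔
      p -ᵥ v 0 ∉ vectorSpan k (range v) := by
  rw [affineIndependent_iff_finrank_vectorSpan_eq k _ (Fintype.card_fin _), vectorSpan_range_cons,
    ← finrank_span_singleton_sup_eq_add_one_iff, hv.finrank_vectorSpan (Fintype.card_fin _)]

end AffineIndependence

variable {n : ℕ}

lemma projPerp_eq_projPerp_iff (V : Submodule ℝ (EuclideanSpace ℝ (Fin n)))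
    (x y : EuclideanSpace ℝ (Fin n)) :
    projPerp V x = projPerp V y ↔ x - y ∈ V := by
  rw [projPerp, projPerp, ← sub_eq_zero, ← Submodule.coe_sub, Submodule.coe_eq_zero,
    ← map_sub, orthogonalProjectionOnto_eq_zero_iff, orthogonal_orthogonal]

lemma projPerp_mem_image_iff (V : Submodule ℝ (EuclideanSpace ℝ (Fin n)))
    {A : AffineSubspace ℝ (EuclideanSpace ℝ (Fin n))} {q : EuclideanSpace ℝ (Fin n)} (hq : q ∈ A)
    (p : EuclideanSpace ℝ (Fin n)) :
    projPerp V p ∈ projPerp V '' (A : Set (EuclideanSpace ℝ (Fin n))) ↔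
      p - q ∈ A.direction ⊔ V := by
  simp_rw [mem_image, projPerp_eq_projPerp_iff, mem_sup]
  constructor
  · rintro ⟨x, hx, hxp⟩
    refine ⟨x - q, AffineSubspace.vsub_mem_direction hx hq, p - x, ?_, by abel⟩
    simpa using V.neg_mem hxp
  · rintro ⟨w, hw, z, hz, hwz⟩
    refine ⟨w + q, AffineSubspace.vadd_mem_of_mem_direction hw hq, ?_⟩
    rw [show w + q - p = -z by rw [← eq_sub_iff_add_eq.mp hwz]; abel]
    exact V.neg_mem hz

lemma transv_bot (V : Submodule ℝ (EuclideanSpace ℝ (Fin n))) : Transv ⊥ V := by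
  have := V.finrank_le
  rw [finrank_euclideanSpace_fin] at this
  rw [Transv, bot_sup_eq, finrank_bot, zero_add, min_eq_left this]

lemma Transv.finrank_sup {W V : Submodule ℝ (EuclideanSpace ℝ (Fin n))} (h : Transv W V)
    (hn : finrank ℝ W + finrank ℝ V ≤ n) :
    finrank ℝ ↥(W ⊔ V) = finrank ℝ W + finrank ℝ V := by
  rw [h, min_eq_left hn]

lemma transv_span_singleton_sup_iff {W V : Submodule ℝ (EuclideanSpace ℝ (Fin n))}
    {u : EuclideanSpace ℝ (Fin n)} (hWV : finrank ℝ ↥(W ⊔ V) = finrank ℝ W + finrank ℝ V)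
    (hn : finrank ℝ W + finrank ℝ V < n) :
    (u ∉ W ∧ Transv (span ℝ {u} ⊔ W) V) ↔ u ∉ W ⊔ V := by
  by_cases huW : u ∈ W
  · simp [huW, mem_sup_left huW]
  · simp only [huW, not_false_eq_true, true_and]
    rw [Transv, finrank_span_singleton_sup_eq_add_one_iff.mpr huW, sup_assoc,
      ← finrank_span_singleton_sup_eq_add_one_iff, hWV, min_eq_left (by omega)]
    omega

theorem stmt_1_general (n k d : ℕ) (hd : d ≤ n - k)
    (V : Submodule ℝ (EuclideanSpace ℝ (Fin n))) (hV : Module.finrank ℝ ↥V = k)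
    (p : EuclideanSpace ℝ (Fin n)) (v : Fin d → EuclideanSpace ℝ (Fin n))
    (hAI : AffineIndependent ℝ v)
    (hT : Transv (simplexDir v) V) :
    (AffineIndependent ℝ (Fin.cons p v : Fin (d+1) → EuclideanSpace ℝ (Fin n)) ∧
      Transv (simplexDir (Fin.cons p v : Fin (d+1) → EuclideanSpace ℝ (Fin n))) V) ↔
      projPerp V p ∉
        projPerp V '' (affineSpan ℝ (Set.range v) : Set (EuclideanSpace ℝ (Fin n))) := by
  rcases d with _ | m
  · have hdir : simplexDir (Fin.cons p v : Fin 1 → EuclideanSpace ℝ (Fin n)) = ⊥ := by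
      simp [simplexDir, Fin.range_cons, direction_affineSpan, vectorSpan_singleton]
    simp [hdir, transv_bot, affineIndependent_of_subsingleton]
  · simp only [simplexDir, direction_affineSpan] at hT ⊢
    have hW : finrank ℝ (vectorSpan ℝ (range v)) = m := hAI.finrank_vectorSpan (Fintype.card_fin _)
    rw [hAI.affineIndependent_cons_iff, vectorSpan_range_cons,
      projPerp_mem_image_iff V (mem_affineSpan ℝ (mem_range_self 0)), direction_affineSpan]
    exact transv_span_singleton_sup_iff (hT.finrank_sup (by omega)) (by omega)

theorem stmt_1 (n k d : ℕ) (hk : k < n) (hd : d ≤ n - k)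
    (V : Submodule ℝ (EuclideanSpace ℝ (Fin n))) (hV : Module.finrank ℝ ↥V = k)
    (p : EuclideanSpace ℝ (Fin n)) (v : Fin d → EuclideanSpace ℝ (Fin n))
    (hAI : AffineIndependent ℝ v)
    (hp : p ∉ convexHull ℝ (Set.range v))
    (hT : Transv (simplexDir v) V) :
    (AffineIndependent ℝ (Fin.cons p v : Fin (d+1) → EuclideanSpace ℝ (Fin n)) ∧
      Transv (simplexDir (Fin.cons p v : Fin (d+1) → EuclideanSpace ℝ (Fin n))) V) ↔
      projPerp V p ∉
        projPerp V '' (affineSpan ℝ (Set.range v) : Set (EuclideanSpace ℝ (Fin n))) :=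
  stmt_1_general n k d hd V hV p v hAI hT
end
end

section
/- Fix natural numbers k < n and let 𝔉 denote the constant foliation of ℝⁿ = ℝᵏ × ℝ^{n−k} by the translates of ℝᵏ × {0}. Let ε > 0 and C ∈ ℕ, let p ∈ ℝⁿ, and let 𝒟 be a finite set of C linear simplices in ℝⁿ, each transverse to 𝔉. Then there exist δ > 0 and a point p' ∈ B(p, ε) such that B(p', δ) ⊆ B(p, ε) and for every simplex Δ ∈ 𝒟 of dimension at most n − k − 1 the join p'⋆Δ is a non-degenerate linear simplex that is δ-semitransverse to 𝔉 in p'. -/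
noncomputable section

open Metric Set

/-!
For each simplex `Δ = vs c` of dimension `m < n - k`, transversality means that `Gr(Δ)` meets
`ℝᵏ × {0}` only in `0`, and an apex `q` makes `q⋆Δ` a non-degenerate simplex transverse to the
foliation as soon as `q` lies off the affine subspace through the vertex `vs c 0` with direction
`Gr(Δ) ⊕ ℝᵏ × {0}`. That subspace has dimension at most `m + k < n`, so it is closed and nowhere
dense; removing finitely many of them from `B(p, ε)` leaves a nonempty open set, and any small
ball inside it does the job.
-/

open Metric Module

section Transversality

variable {n : ℕ}

theorem transv_iff_disjoint {V W : Submodule ℝ (EuclideanSpace ℝ (Fin n))}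
    (h : finrank ℝ V + finrank ℝ W ≤ n) : Transv V W ↔ Disjoint V W := by
  have hsum := Submodule.finrank_sup_add_finrank_inf_eq V W
  rw [Transv, min_eq_left h, disjoint_iff, ← Submodule.finrank_eq_zero]
  omega

theorem finrank_stdFol_le {k : ℕ} (hk : k ≤ n) : finrank ℝ (stdFol n k) ≤ k := by
  let restrict : EuclideanSpace ℝ (Fin n) →ₗ[ℝ] Fin k → ℝ :=
    LinearMap.pi fun i =>
      (EuclideanSpace.proj (Fin.castLE hk i) : EuclideanSpace ℝ (Fin n) →L[ℝ] ℝ)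
  have hinj : Function.Injective (restrict ∘ₗ (stdFol n k).subtype) := by
    rw [← LinearMap.ker_eq_bot, LinearMap.ker_eq_bot']
    intro x hx
    ext i
    rcases lt_or_ge (i : ℕ) k with hi | hi
    · exact congr_fun hx ⟨i, hi⟩
    · exact x.2 i hi
  simpa using LinearMap.finrank_le_finrank_of_injective hinj

theorem finrank_simplexDir {m : ℕ} {v : Fin (m + 1) → EuclideanSpace ℝ (Fin n)}
    (hv : AffineIndependent ℝ v) : finrank ℝ (simplexDir v) = m := by
  rw [simplexDir, direction_affineSpan]
  exact hv.finrank_vectorSpan (by simp)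

theorem simplexDir_cons {m : ℕ} (q : EuclideanSpace ℝ (Fin n))
    (v : Fin (m + 1) → EuclideanSpace ℝ (Fin n)) :
    simplexDir (Fin.cons q v : Fin (m + 2) → EuclideanSpace ℝ (Fin n)) =
      Submodule.span ℝ {q - v 0} ⊔ simplexDir v := by
  rw [simplexDir, Fin.range_cons, ← affineSpan_insert_affineSpan,
    AffineSubspace.direction_affineSpan_insert (mem_affineSpan ℝ (mem_range_self 0)), vsub_eq_sub,
    simplexDir]

theorem affineIndependent_cons_and_transv_of_notMem {m : ℕ}
    {v : Fin (m + 1) → EuclideanSpace ℝ (Fin n)} {V : Submodule ℝ (EuclideanSpace ℝ (Fin n))}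
    (hv : AffineIndependent ℝ v) (hdisj : Disjoint (simplexDir v) V)
    (hdim : m + 1 + finrank ℝ V ≤ n) {q : EuclideanSpace ℝ (Fin n)}
    (hq : q - v 0 ∉ simplexDir v ⊔ V) :
    AffineIndependent ℝ (Fin.cons q v : Fin (m + 2) → EuclideanSpace ℝ (Fin n)) ∧
      Transv (simplexDir (Fin.cons q v : Fin (m + 2) → EuclideanSpace ℝ (Fin n))) V := by
  have hq' : q - v 0 ∉ simplexDir v := fun h => hq (Submodule.mem_sup_left h)
  have hfr : finrank ℝ (simplexDir (Fin.cons q v : Fin (m + 2) → _)) = m + 1 := by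
    rw [simplexDir_cons, sup_comm, Submodule.finrank_sup_span_singleton hq', finrank_simplexDir hv]
  refine ⟨?_, (transv_iff_disjoint (by omega)).2 ?_⟩
  · rw [simplexDir, direction_affineSpan] at hfr
    exact (affineIndependent_iff_finrank_vectorSpan_eq ℝ _ (by simp)).2 hfr
  · rw [simplexDir_cons]
    exact hdisj.disjoint_sup_left_of_disjoint_sup_right
      (Submodule.disjoint_span_singleton_of_notMem hq).symm

end Transversality

theorem AffineSubspace.dense_compl {E : Type*} [NormedAddCommGroup E] [NormedSpace ℝ E]
    [FiniteDimensional ℝ E] {A : AffineSubspace ℝ E} (hA : A ≠ ⊤) : Dense (A : Set E)ᶜ := by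
  rw [← interior_eq_empty_iff_dense_compl, ← Set.not_nonempty_iff_eq_empty]
  intro h
  exact hA (by simpa using
    affineSpan_eq_top_of_nonempty_interior (h.mono (interior_mono (subset_convexHull ℝ _))))

theorem AffineSubspace.mk'_ne_top_of_finrank_lt {K E : Type*} [Field K] [AddCommGroup E]
    [Module K E] [FiniteDimensional K E] {x : E} {W : Submodule K E}
    (h : finrank K W < finrank K E) : AffineSubspace.mk' x W ≠ ⊤ := by
  intro htop
  have hW : W = ⊤ := by simpa using congrArg AffineSubspace.direction htop
  rw [hW, finrank_top] at h
  exact h.false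

theorem exists_ball_subset_ball_disjoint_affineSubspaces {E ι : Type*} [NormedAddCommGroup E]
    [NormedSpace ℝ E] [FiniteDimensional ℝ E] {s : Set ι} (hs : s.Finite)
    {A : ι → AffineSubspace ℝ E} (hA : ∀ i ∈ s, A i ≠ ⊤) {p : E} {ε : ℝ} (hε : 0 < ε) :
    ∃ δ > (0 : ℝ), ∃ p' : E, dist p' p < ε ∧ ball p' δ ⊆ ball p ε ∧
      ∀ i ∈ s, Disjoint (ball p' δ) (A i : Set E) := by
  set U := ⋂ i ∈ s, (A i : Set E)ᶜ
  have hUopen : IsOpen U :=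
    hs.isOpen_biInter fun i _ => (A i).closed_of_finiteDimensional.isOpen_compl
  have hUdense : Dense U :=
    dense_biInter_of_isOpen (fun i _ => (A i).closed_of_finiteDimensional.isOpen_compl)
      hs.countable fun i hi => AffineSubspace.dense_compl (hA i hi)
  obtain ⟨p', hp'⟩ := hUdense.inter_open_nonempty _ isOpen_ball (nonempty_ball.2 hε)
  obtain ⟨δ, hδ, hsub⟩ := Metric.isOpen_iff.1 (isOpen_ball.inter hUopen) p' hp'
  refine ⟨δ, hδ, p', hp'.1, fun x hx => (hsub hx).1, fun i hi => Set.disjoint_left.2 ?_⟩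
  exact fun x hx => Set.mem_iInter₂.1 (hsub hx).2 i hi

theorem stmt_17 (n k C : ℕ) (hk : k < n)
    (ε : ℝ) (hε : 0 < ε) (p : EuclideanSpace ℝ (Fin n))
    (dm : Fin C → ℕ) (vs : (c : Fin C) → Fin (dm c + 1) → EuclideanSpace ℝ (Fin n))
    (hAI : ∀ c, AffineIndependent ℝ (vs c))
    (hT : ∀ c, Transv (simplexDir (vs c)) (stdFol n k)) :
    ∃ δ > (0:ℝ), ∃ p' : EuclideanSpace ℝ (Fin n), dist p' p < ε ∧
      Metric.ball p' δ ⊆ Metric.ball p ε ∧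
      ∀ c, dm c < n - k → SemiT δ p' (vs c) (stdFol n k) := by
  set V := stdFol n k
  have hV : finrank ℝ V ≤ k := finrank_stdFol_le hk.le
  let A c := AffineSubspace.mk' (vs c 0) (simplexDir (vs c) ⊔ V)
  have hA : ∀ c ∈ {c | dm c < n - k}, A c ≠ ⊤ := fun c (hc : dm c < n - k) =>
    AffineSubspace.mk'_ne_top_of_finrank_lt <|
      (Submodule.finrank_add_le_finrank_add_finrank _ _).trans_lt <| by
        rw [finrank_simplexDir (hAI c), finrank_euclideanSpace_fin]
        omega
  obtain ⟨δ, hδ, p', hp', hball, hfree⟩ :=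
    exists_ball_subset_ball_disjoint_affineSubspaces (Set.toFinite _) hA hε
  refine ⟨δ, hδ, p', hp', hball, fun c hc q hq => ?_⟩
  have hdisj : Disjoint (simplexDir (vs c)) V :=
    (transv_iff_disjoint (by rw [finrank_simplexDir (hAI c)]; omega)).1 (hT c)
  refine affineIndependent_cons_and_transv_of_notMem (hAI c) hdisj (by omega) fun hmem => ?_
  exact Set.disjoint_left.1 (hfree c hc) (mem_ball.2 hq) (AffineSubspace.mem_mk'.2 hmem)
end
end
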